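/- Under the hypotheses of the eigenvalue identity λ = -Δ(ln φ) + div(s) - |∇(ln φ) - s|² + K - F on a closed orientable surface S of genus g, if g ≥ 1 and min_S F > 0, then λ < 0. -/

import Mathlib

/-!
Integrate the identity over `S`. The Laplacian and divergence terms integrate to zero and
Gauss–Bonnet gives `∫ K = 4π(1 - g) ≤ 0`, so `λ · |S| = 4π(1 - g) - ∫ (|∇ ln φ - s|² + F)`,
and the last integral is at least `μ · |S| > 0`.
-/

open MeasureTheory

lemma Continuous.integrable_of_compactSpace {X E : Type*} [TopologicalSpace X] [CompactSpace X]
    [MeasurableSpace X] [OpensMeasurableSpace X] [NormedAddCommGroup E] {μ : Measure X}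
    [IsFiniteMeasure μ] {f : X → E} (hf : Continuous f) : Integrable f μ :=
  hf.integrable_of_hasCompactSupport (HasCompactSupport.of_compactSpace f)

lemma MeasureTheory.mul_measureReal_univ_le_integral {X : Type*} [MeasurableSpace X]
    {μ : Measure X} [IsFiniteMeasure μ] {f : X → ℝ} {c : ℝ} (hf : Integrable f μ)
    (hc : ∀ x, c ≤ f x) : c * μ.real Set.univ ≤ ∫ x, f x ∂μ := by
  simpa using setIntegral_ge_of_const_le_real MeasurableSet.univ (measure_ne_top μ _)
    (fun x _ => hc x) hf.integrableOn

theorem stmt_1_general {S : Type*} [TopologicalSpace S] [CompactSpace S]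
    [MeasurableSpace S] [BorelSpace S]
    (area : Measure S) [IsFiniteMeasure area]
    (harea : 0 < (area Set.univ).toReal)
    (g : ℕ) (hg : 1 ≤ g)
    (lapLnφ divs normSq K F : S → ℝ) (lam μ : ℝ)
    (hlapc : Continuous lapLnφ) (hdivc : Continuous divs)
    (hKc : Continuous K)
    (hnormSq : ∀ x, 0 ≤ normSq x)
    (hlap0 : ∫ x, lapLnφ x ∂area = 0)
    (hdiv0 : ∫ x, divs x ∂area = 0)
    (hGB : ∫ x, K x ∂area = 4 * Real.pi * (1 - (g : ℝ)))
    (hid : ∀ x, lam = -lapLnφ x + divs x - normSq x + K x - F x)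
    (hmin : ∀ x, μ ≤ F x)
    (hμpos : 0 < μ) :
    lam < 0 := by
  have hrest : (fun x => normSq x + F x) = fun x => -lapLnφ x + divs x + K x - lam := by
    funext x; linarith [hid x]
  have hlapI : Integrable lapLnφ area := hlapc.integrable_of_compactSpace
  have hdivI : Integrable divs area := hdivc.integrable_of_compactSpace
  have hKI : Integrable K area := hKc.integrable_of_compactSpace
  have hrestI : Integrable (fun x => normSq x + F x) area := by
    rw [hrest]; fun_prop
  have hrest_integral :
      ∫ x, (normSq x + F x) ∂area = 4 * Real.pi * (1 - (g : ℝ)) - lam * area.real Set.univ := by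
    rw [hrest, integral_sub, integral_add, integral_add, integral_neg, hlap0, hdiv0, hGB,
      integral_const, smul_eq_mul]
    · ring
    all_goals fun_prop
  have hrest_ge : μ * area.real Set.univ ≤ ∫ x, (normSq x + F x) ∂area :=
    mul_measureReal_univ_le_integral hrestI fun x => by linarith [hnormSq x, hmin x]
  have hgenus : 4 * Real.pi * (1 - (g : ℝ)) ≤ 0 := by
    have : (1 : ℝ) ≤ g := by exact_mod_cast hg
    nlinarith [Real.pi_pos]
  have harea' : 0 < area.real Set.univ := harea
  nlinarith

/-- under the eigenvalue identity on a closed orientable surface of genus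
`g ≥ 1`, if `min_S F = μ > 0` then `λ < 0`.  Notation as in the abstraction of the
stability identity: `lapLnφ = Δ ln φ`, `divs = div s`, `normSq = |∇ ln φ - s|²`. -/
theorem stmt_1 {S : Type*} [TopologicalSpace S] [CompactSpace S] [Nonempty S]
    [MeasurableSpace S] [BorelSpace S]
    (area : Measure S) [IsFiniteMeasure area]
    (harea : 0 < (area Set.univ).toReal)
    (g : ℕ) (hg : 1 ≤ g)
    (lapLnφ divs normSq K F : S → ℝ) (lam μ : ℝ)
    (hlapc : Continuous lapLnφ) (hdivc : Continuous divs) (hnc : Continuous normSq)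
    (hKc : Continuous K) (hFc : Continuous F)
    (hnormSq : ∀ x, 0 ≤ normSq x)
    (hlap0 : ∫ x, lapLnφ x ∂area = 0)
    (hdiv0 : ∫ x, divs x ∂area = 0)
    (hGB : ∫ x, K x ∂area = 4 * Real.pi * (1 - (g : ℝ)))
    (hid : ∀ x, lam = -lapLnφ x + divs x - normSq x + K x - F x)
    (hmin : ∀ x, μ ≤ F x) (hex : ∃ x, F x = μ)
    (hμpos : 0 < μ) :
    lam < 0 :=
  stmt_1_general area harea g hg lapLnφ divs normSq K F lam μ hlapc hdivc hKc hnormSq hlap0 hdiv0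
    hGB hid hmin hμpos
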